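/- arXiv:1507.04419 — 3 statements merged into one kernel-verified Lean document; each statement's English description precedes it below -/
import Mathlib

section
/- Let G be a group with commuting automorphisms σ, τ of order dividing 2 and θ = σ ∘ τ. For γ ∈ G, define G^{σθ}_γ = {(x, y) ∈ G^σ × G^θ : x⁻¹ γ y = γ} and C^τ_{G^σ, δ} = {x ∈ G^σ : x δ τ(x)⁻¹ = δ}. Then the map (x, y) ↦ x defines a group isomorphism from G^{σθ}_γ onto C^τ_{G^σ, γ·θ(γ)⁻¹}. -/
variable {G : Type*} [Group G]

/-- The subgroup `G^{σθ}_γ = {(x,y) ∈ G^σ × G^θ : x⁻¹ γ y = γ}`, where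
`θ = σ ∘ τ` is realized as `τ.trans σ`. -/
def Gsigmatheta (σ τ : G ≃* G) (γ : G) : Subgroup (G × G) where
  carrier := {p | σ p.1 = p.1 ∧ (τ.trans σ) p.2 = p.2 ∧ p.1⁻¹ * γ * p.2 = γ}
  one_mem' := ⟨map_one σ, map_one _, by simp⟩
  mul_mem' := by
    rintro ⟨a, b⟩ ⟨c, d⟩ ⟨h1, h2, h3⟩ ⟨k1, k2, k3⟩
    refine ⟨?_, ?_, ?_⟩
    · show σ (a * c) = a * c
      rw [map_mul, h1, k1]
    · show (τ.trans σ) (b * d) = b * d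
      rw [map_mul, h2, k2]
    · show (a * c)⁻¹ * γ * (b * d) = γ
      have h : (a * c)⁻¹ * γ * (b * d) = c⁻¹ * (a⁻¹ * γ * b) * d := by group
      rw [h, h3, k3]
  inv_mem' := by
    rintro ⟨a, b⟩ ⟨h1, h2, h3⟩
    refine ⟨?_, ?_, ?_⟩
    · show σ a⁻¹ = a⁻¹
      rw [map_inv, h1]
    · show (τ.trans σ) b⁻¹ = b⁻¹
      rw [map_inv, h2]
    · show a⁻¹⁻¹ * γ * b⁻¹ = γ
      rw [inv_inv]
      conv_lhs => rw [← h3]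
      group

/-- The τ-centralizer `C^τ_{G^σ, δ} = {x ∈ G^σ : x δ τ(x)⁻¹ = δ}`. -/
def tauCentralizer (σ τ : G ≃* G) (δ : G) : Subgroup G where
  carrier := {x | σ x = x ∧ x * δ * (τ x)⁻¹ = δ}
  one_mem' := ⟨map_one σ, by rw [map_one]; group⟩
  mul_mem' := by
    rintro a b ⟨ha1, ha2⟩ ⟨hb1, hb2⟩
    refine ⟨by rw [map_mul, ha1, hb1], ?_⟩
    rw [map_mul]
    have h : a * b * δ * (τ a * τ b)⁻¹ = a * (b * δ * (τ b)⁻¹) * (τ a)⁻¹ := by group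
    rw [h, hb2, ha2]
  inv_mem' := by
    rintro a ⟨ha1, ha2⟩
    refine ⟨by rw [map_inv, ha1], ?_⟩
    rw [map_inv, inv_inv]
    conv_lhs => rw [← ha2]
    group

/-- `(x, y) ↦ x` is a group isomorphism from `G^{σθ}_γ` onto
`C^τ_{G^σ, γ·θ(γ)⁻¹}`. -/
theorem Gsigmatheta_iso_tauCentralizer (σ τ : G ≃* G)
    (hσ : ∀ g, σ (σ g) = g) (hτ : ∀ g, τ (τ g) = g)
    (hcomm : ∀ g, σ (τ g) = τ (σ g)) (γ : G) :
    ∃ e : Gsigmatheta σ τ γ ≃* tauCentralizer σ τ (γ * ((τ.trans σ) γ)⁻¹),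
      ∀ p : Gsigmatheta σ τ γ, (e p : G) = (p : G × G).1 := by
  set θ : G ≃* G := τ.trans σ with hθ
  have hθx : ∀ x : G, σ x = x → θ x = τ x := by
    intro x hx
    show σ (τ x) = τ x
    rw [hcomm, hx]
  have fwd : ∀ p : G × G, p ∈ Gsigmatheta σ τ γ →
      p.1 ∈ tauCentralizer σ τ (γ * (θ γ)⁻¹) := by
    rintro ⟨x, y⟩ ⟨h1, h2, h3⟩
    dsimp only at h1 h2 h3 ⊢
    refine ⟨h1, ?_⟩
    have hy : y = γ⁻¹ * x * γ := by
      apply mul_left_cancel (a := x⁻¹ * γ)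
      rw [h3]; group
    rw [hy, map_mul, map_mul, map_inv, hθx x h1] at h2
    calc x * (γ * (θ γ)⁻¹) * (τ x)⁻¹
        = γ * (γ⁻¹ * x * γ) * ((θ γ)⁻¹ * (τ x)⁻¹) := by group
      _ = γ * ((θ γ)⁻¹ * τ x * θ γ) * ((θ γ)⁻¹ * (τ x)⁻¹) := by rw [h2]
      _ = γ * (θ γ)⁻¹ := by group
  have bwd : ∀ x : G, x ∈ tauCentralizer σ τ (γ * (θ γ)⁻¹) →
      (x, γ⁻¹ * x * γ) ∈ Gsigmatheta σ τ γ := by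
    rintro x ⟨h1, h2⟩
    refine ⟨h1, ?_, by group⟩
    show θ (γ⁻¹ * x * γ) = γ⁻¹ * x * γ
    rw [map_mul, map_mul, map_inv, hθx x h1]
    calc (θ γ)⁻¹ * τ x * θ γ
        = γ⁻¹ * (γ * (θ γ)⁻¹) * τ x * θ γ := by group
      _ = γ⁻¹ * (x * (γ * (θ γ)⁻¹) * (τ x)⁻¹) * τ x * θ γ := by rw [h2]
      _ = γ⁻¹ * x * γ := by group
  refine ⟨{
    toFun := fun p => ⟨(p : G × G).1, fwd _ p.2⟩
    invFun := fun x => ⟨((x : G), γ⁻¹ * (x : G) * γ), bwd _ x.2⟩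
    left_inv := ?_
    right_inv := ?_
    map_mul' := ?_ }, fun p => rfl⟩
  · rintro ⟨⟨x, y⟩, h1, h2, h3⟩
    ext
    · rfl
    · show γ⁻¹ * x * γ = y
      dsimp only at h3
      symm
      apply mul_left_cancel (a := x⁻¹ * γ)
      rw [h3]; group
  · rintro ⟨x, hx⟩; rfl
  · intro p q; rfl
end

section
/- Let G be a group with commuting automorphisms σ, τ of order dividing 2, θ = σ ∘ τ. For any γ ∈ G, the stabilizer of γ·θ(γ)⁻¹ under the τ-conjugation action of G^σ (where x acts by δ ↦ x δ τ(x)⁻¹) equals the image of G^{σθ}_γ under projection to the first coordinate. -/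
/-- The stabilizer of `γθ(γ)⁻¹` under the τ-conjugation action of
`G^σ` (`x` acts by `δ ↦ x δ τ(x)⁻¹`) equals the image of
`G^{σθ}_γ = {(x,y) ∈ G^σ × G^θ : x⁻¹ γ y = γ}` under the first projection.
Here `θ = σ ∘ τ` is `τ.trans σ`. -/
theorem stabilizer_eq_image_fst {G : Type*} [Group G] (σ τ : G ≃* G)
    (hσ : ∀ g, σ (σ g) = g) (hτ : ∀ g, τ (τ g) = g)
    (hcomm : ∀ g, σ (τ g) = τ (σ g)) (γ : G) :
    {x | σ x = x ∧
        x * (γ * ((τ.trans σ) γ)⁻¹) * (τ x)⁻¹ = γ * ((τ.trans σ) γ)⁻¹}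
      = Prod.fst ''
          {p : G × G | σ p.1 = p.1 ∧ (τ.trans σ) p.2 = p.2 ∧
            p.1⁻¹ * γ * p.2 = γ} := by
  ext x
  simp only [Set.mem_setOf_eq, Set.mem_image, MulEquiv.trans_apply, Prod.exists]
  constructor
  · rintro ⟨hx, hst⟩
    refine ⟨x, γ⁻¹ * x * γ, ⟨hx, ?_, by group⟩, rfl⟩
    have h1 : σ (τ (γ⁻¹ * x * γ)) = (σ (τ γ))⁻¹ * τ x * σ (τ γ) := by
      simp [mul_assoc, hcomm, hx]
    rw [h1]
    set c := σ (τ γ) with hc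
    rw [mul_inv_eq_iff_eq_mul] at hst
    have h2 : τ x = c * γ⁻¹ * (x * (γ * c⁻¹)) := by
      rw [hst]; group
    rw [h2]; group
  · rintro ⟨a, b, ⟨ha, hb, hab⟩, rfl⟩
    refine ⟨ha, ?_⟩
    have hbval : b = γ⁻¹ * a * γ :=
      mul_left_cancel (a := a⁻¹ * γ) (by rw [hab]; group)
    have hτa : σ (τ (γ⁻¹ * a * γ)) = (σ (τ γ))⁻¹ * τ a * σ (τ γ) := by
      simp [mul_assoc, hcomm, ha]
    rw [hbval, hτa] at hb
    set c := σ (τ γ) with hc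
    have hta : τ a = c * (γ⁻¹ * a * γ) * c⁻¹ := by
      rw [← hb]; group
    rw [hta]; group
end

section
/- Let G be a group with commuting automorphisms σ, τ of order dividing 2, θ = σ ∘ τ. Suppose γ, γ' ∈ G satisfy γ' = x⁻¹ γ y for some x ∈ G^σ, y ∈ G^θ. Then the τ-centralizers C^τ_{G^σ, γθ(γ)⁻¹} and C^τ_{G^σ, γ'θ(γ')⁻¹} are conjugate subgroups of G^σ: specifically, C^τ_{G^σ, γ'θ(γ')⁻¹} = x⁻¹ · C^τ_{G^σ, γθ(γ)⁻¹} · x. -/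
/-- If `γ' = x⁻¹ γ y` with `x ∈ G^σ`, `y ∈ G^θ`, then the
τ-centralizers satisfy
`C^τ_{G^σ, γ'θ(γ')⁻¹} = x⁻¹ · C^τ_{G^σ, γθ(γ)⁻¹} · x` (as subsets of `G^σ`).
Here `θ = σ ∘ τ` is `τ.trans σ` and
`C^τ_{G^σ, δ} = {a : σ a = a ∧ a δ τ(a)⁻¹ = δ}`. -/
theorem tauCentralizer_conjugate {G : Type*} [Group G] (σ τ : G ≃* G)
    (hσ : ∀ g, σ (σ g) = g) (hτ : ∀ g, τ (τ g) = g)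
    (hcomm : ∀ g, σ (τ g) = τ (σ g))
    (γ γ' x y : G) (hx : σ x = x) (hy : (τ.trans σ) y = y)
    (h : γ' = x⁻¹ * γ * y) :
    {a | σ a = a ∧
        a * (γ' * ((τ.trans σ) γ')⁻¹) * (τ a)⁻¹ = γ' * ((τ.trans σ) γ')⁻¹}
      = (fun a => x⁻¹ * a * x) ''
          {a | σ a = a ∧
            a * (γ * ((τ.trans σ) γ)⁻¹) * (τ a)⁻¹ = γ * ((τ.trans σ) γ)⁻¹} := by
  set δ := γ * ((τ.trans σ) γ)⁻¹ with hδ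
  have hy' : σ (τ y) = y := hy
  have key : γ' * ((τ.trans σ) γ')⁻¹ = x⁻¹ * δ * τ x := by
    subst h
    simp only [MulEquiv.trans_apply, map_mul, map_inv, hcomm x, hx, hy', hδ]
    group
  ext a
  simp only [Set.mem_setOf_eq, Set.mem_image, key]
  constructor
  · rintro ⟨ha1, ha2⟩
    refine ⟨x * a * x⁻¹, ⟨?_, ?_⟩, by group⟩
    · simp [map_mul, map_inv, hx, ha1]
    · rw [show x * a * x⁻¹ * δ * (τ (x * a * x⁻¹))⁻¹
          = x * (a * (x⁻¹ * δ * τ x) * (τ a)⁻¹) * (τ x)⁻¹ by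
        simp only [map_mul, map_inv]; group, ha2]
      group
  · rintro ⟨b, ⟨hb1, hb2⟩, rfl⟩
    refine ⟨by simp [map_mul, map_inv, hx, hb1], ?_⟩
    rw [show x⁻¹ * b * x * (x⁻¹ * δ * τ x) * (τ (x⁻¹ * b * x))⁻¹
        = x⁻¹ * (b * δ * (τ b)⁻¹) * τ x by
      simp only [map_mul, map_inv]; group, hb2]
end
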